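/- Let (G, ≤) be a lefthanded graph with labels p_v ∈ [0,1] satisfying Shearer's condition: 𝔮(S) ≥ 0 for all S ⊆ V and 𝔮(∅) > 0. Then there exists an assignment of numbers x_v ∈ [0,1] such that p_v = x_v · Π_{u ~ v, u ≤ v} (1 − x_u) for all v, and Π_{v ∈ V} (1 − x_v) = 𝔮(∅). -/

import Mathlib

open scoped Classical

/-- A tree order: whenever `w < u` and `w < v`, the elements `u` and `v` are comparable. -/
def TreeOrder (V : Type*) [PartialOrder V] : Prop :=
  ∀ w u v : V, w < u → w < v → (u ≤ v ∨ v ≤ u)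

/-- A lefthanded graph with respect to the partial order on `V`. -/
def Lefthanded {V : Type*} [PartialOrder V] (G : SimpleGraph V) : Prop :=
  TreeOrder V ∧
  (∀ u v : V, G.Adj u v → u ≤ v ∨ v ≤ u) ∧
  (∀ w u v : V, w < u → u < v → G.Adj v w → G.Adj v u)

/-- `D_v = {u : u < v}`. -/
noncomputable def Dset {V : Type*} [Fintype V] [PartialOrder V] (v : V) : Finset V :=
  Finset.univ.filter (fun u => u < v)

/-- `D̄_v = D_v ∪ {v}`. -/
noncomputable def Dbar {V : Type*} [Fintype V] [DecidableEq V] [PartialOrder V] (v : V) :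
    Finset V :=
  insert v (Dset v)

/-- `N_v = {u < v : u ~ v}`. -/
noncomputable def Nset {V : Type*} [Fintype V] [PartialOrder V] (G : SimpleGraph V) (v : V) :
    Finset V :=
  Finset.univ.filter (fun u => u < v ∧ G.Adj u v)

/-- `F_v = D_v \ N_v`. -/
noncomputable def Fset {V : Type*} [Fintype V] [DecidableEq V] [PartialOrder V]
    (G : SimpleGraph V) (v : V) : Finset V :=
  Dset v \ Nset G v

/-- `μ(U)`: the set of maximal elements of `U`. -/
noncomputable def maxElts {V : Type*} [PartialOrder V] (U : Finset V) : Finset V :=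
  U.filter (fun u => ∀ w ∈ U, ¬ u < w)

/-- `I` is an independent set of `G`. -/
def IndepSet {V : Type*} (G : SimpleGraph V) (I : Finset V) : Prop :=
  ∀ u ∈ I, ∀ w ∈ I, ¬ G.Adj u w

/-- `B(S) = Σ_{I ⊆ S, I independent} (−1)^{|I|} Π_{v∈I} p_v`. -/
noncomputable def Bfun {V : Type*} [Fintype V] (G : SimpleGraph V) (p : V → ℝ) (S : Finset V) :
    ℝ :=
  ∑ I ∈ S.powerset.filter (fun I => IndepSet G I), (-1 : ℝ) ^ I.card * ∏ v ∈ I, p v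

/-- `𝔮(S) = Σ_{I ⊇ S, I independent} (−1)^{|I|−|S|} Π_{v∈I} p_v`. -/
noncomputable def qfun {V : Type*} [Fintype V] (G : SimpleGraph V) (p : V → ℝ) (S : Finset V) :
    ℝ :=
  ∑ I ∈ Finset.univ.powerset.filter (fun I => IndepSet G I ∧ S ⊆ I),
    (-1 : ℝ) ^ (I.card - S.card) * ∏ v ∈ I, p v

/-- A down-closed set. -/
def DownClosed {V : Type*} [Fintype V] [PartialOrder V] (S : Finset V) : Prop :=
  ∀ s ∈ S, Dset s ⊆ S

/-!
Write `B(U)` for `Bfun G p U`, the independence polynomial of `U` evaluated at `-p`.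
Inclusion–exclusion gives `B(U) = ∑_{S ⊆ V \ U} 𝔮(S)`, so Shearer's condition makes every `B(U)`
positive. Deleting `v` from `D̄_v` gives `B(D̄_v) = B(D_v) - p_v B(F_v)`, which suggests
`x_v = p_v B(F_v) / B(D_v)`, so that `1 - x_v = B(D̄_v) / B(D_v)`. In a lefthanded graph a maximal
element `m` of a down-closed set `U` has no neighbour in `U` outside `D̄_m`, so `B` factorises and
telescopes to `B(U) = ∏_{v ∈ U} B(D̄_v) / B(D_v)`. For `U = V` this is the product identity, and
comparing `U = D_v` with `U = F_v` gives the equation for `p_v`.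
-/

lemma indepSet_insert_iff {V : Type*} [DecidableEq V] (G : SimpleGraph V) {v : V} {I : Finset V} :
    IndepSet G (insert v I) ↔ IndepSet G I ∧ ∀ u ∈ I, ¬ G.Adj v u := by
  constructor
  · intro h
    exact ⟨fun u hu w hw => h u (Finset.mem_insert_of_mem hu) w (Finset.mem_insert_of_mem hw),
      fun u hu => h v (Finset.mem_insert_self v I) u (Finset.mem_insert_of_mem hu)⟩
  · rintro ⟨hI, hv⟩ u hu w hw
    rw [Finset.mem_insert] at hu hw
    rcases hu with rfl | hu <;> rcases hw with rfl | hw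
    · exact G.irrefl
    · exact hv w hw
    · exact fun h => hv u hu h.symm
    · exact hI u hu w hw

section Independence

variable {V : Type*} [Fintype V] (G : SimpleGraph V) (p : V → ℝ)

lemma Bfun_empty : Bfun G p ∅ = 1 := by
  rw [Bfun, Finset.powerset_empty, Finset.filter_singleton,
    if_pos (show IndepSet G ∅ from fun u hu => absurd hu (Finset.notMem_empty u))]
  simp

variable [DecidableEq V]

lemma Bfun_insert {v : V} {D : Finset V} (hv : v ∉ D) :
    Bfun G p (insert v D) = Bfun G p D - p v * Bfun G p (D.filter fun u => ¬ G.Adj v u) := by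
  have hsets : D.powerset.filter (fun I => IndepSet G (insert v I)) =
      (D.filter fun u => ¬ G.Adj v u).powerset.filter (IndepSet G) := by
    ext I
    simp only [Finset.mem_filter, Finset.mem_powerset, Finset.subset_iff, indepSet_insert_iff,
      imp_and, forall_and]
    tauto
  rw [Bfun, Finset.sum_filter, Finset.sum_powerset_insert hv, ← Finset.sum_filter,
    ← Finset.sum_filter, hsets, Bfun, Bfun, Finset.mul_sum, sub_eq_add_neg, ← Finset.sum_neg_distrib]
  congr 1
  refine Finset.sum_congr rfl fun I hI => ?_
  have hvI : v ∉ I := fun h =>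
    hv (Finset.mem_filter.mp (Finset.mem_powerset.mp (Finset.mem_filter.mp hI).1 h)).1
  rw [Finset.card_insert_of_notMem hvI, Finset.prod_insert hvI]
  ring

lemma Bfun_union {A B : Finset V} (hAB : Disjoint A B) (hE : ∀ a ∈ A, ∀ b ∈ B, ¬ G.Adj a b) :
    Bfun G p (A ∪ B) = Bfun G p A * Bfun G p B := by
  induction A using Finset.strongInduction with
  | H A ih =>
  rcases A.eq_empty_or_nonempty with rfl | ⟨a, ha⟩
  · rw [Finset.empty_union, Bfun_empty, one_mul]
  set P : V → Prop := fun u => ¬ G.Adj a u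
  set A₀ := A.erase a
  have hA : A = insert a A₀ := (Finset.insert_erase ha).symm
  have haB : a ∉ B := Finset.disjoint_left.mp hAB ha
  have hA₀ : A₀ ⊂ A := Finset.erase_ssubset ha
  have hA₀P : A₀.filter P ⊂ A := (Finset.filter_subset P A₀).trans_ssubset hA₀
  have hBP : B.filter P = B := Finset.filter_true_of_mem fun b hb => hE a ha b hb
  have ih_sub : ∀ A' ⊂ A, Bfun G p (A' ∪ B) = Bfun G p A' * Bfun G p B := fun A' hA' =>
    ih A' hA' (hAB.mono_left hA'.subset) fun a' ha' => hE a' (hA'.subset ha')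
  rw [hA, Finset.insert_union, Bfun_insert G p (by simp [A₀, haB]), Finset.filter_union, hBP,
    ih_sub A₀ hA₀, ih_sub _ hA₀P, Bfun_insert G p (Finset.notMem_erase a A)]
  ring

end Independence

lemma neg_one_pow_sub_of_le {R : Type*} [Monoid R] [HasDistribNeg R] {m n : ℕ} (h : m ≤ n) :
    (-1 : R) ^ (n - m) = (-1) ^ n * (-1) ^ m := by
  obtain ⟨k, rfl⟩ := Nat.exists_eq_add_of_le h
  rw [Nat.add_sub_cancel_left, pow_add, ((Commute.neg_one_left _).pow_left m).eq, mul_assoc,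
    ← pow_add, ← two_mul, pow_mul, neg_one_sq, one_pow, mul_one]

section InclusionExclusion

variable {V : Type*} [Fintype V] [DecidableEq V] (G : SimpleGraph V) (p : V → ℝ)

lemma Bfun_eq_sum_qfun (U : Finset V) : Bfun G p U = ∑ S ∈ Uᶜ.powerset, qfun G p S := by
  have alternating : ∀ T : Finset V, ∑ S ∈ T.powerset, (-1 : ℝ) ^ S.card = if T = ∅ then 1 else 0 :=
    fun T => by exact_mod_cast Finset.sum_powerset_neg_one_pow_card
  calc Bfun G p U
      = ∑ I ∈ Finset.univ.powerset.filter (IndepSet G),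
          if I ∩ Uᶜ = ∅ then (-1 : ℝ) ^ I.card * ∏ v ∈ I, p v else 0 := by
        rw [Bfun, ← Finset.sum_filter, Finset.filter_filter]
        congr 1
        ext I
        simp [← Finset.sdiff_eq_inter_compl, Finset.sdiff_eq_empty_iff_subset, and_comm]
    _ = ∑ I ∈ Finset.univ.powerset.filter (IndepSet G),
          ∑ S ∈ (I ∩ Uᶜ).powerset, (-1 : ℝ) ^ (I.card - S.card) * ∏ v ∈ I, p v := by
        refine Finset.sum_congr rfl fun I _ => ?_
        calc (if I ∩ Uᶜ = ∅ then (-1 : ℝ) ^ I.card * ∏ v ∈ I, p v else 0)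
            = (-1 : ℝ) ^ I.card * (∏ v ∈ I, p v) * ∑ S ∈ (I ∩ Uᶜ).powerset, (-1 : ℝ) ^ S.card := by
              rw [alternating]; split_ifs <;> simp
          _ = _ := by
              rw [Finset.mul_sum]
              refine Finset.sum_congr rfl fun S hS => ?_
              have hSI : S ⊆ I := (Finset.mem_powerset.mp hS).trans Finset.inter_subset_left
              rw [neg_one_pow_sub_of_le (Finset.card_le_card hSI)]
              ring
    _ = ∑ S ∈ Uᶜ.powerset, qfun G p S := by
        refine (Finset.sum_comm' fun S I => ?_).symm
        simp only [Finset.mem_powerset, Finset.mem_filter, Finset.subset_univ, true_and,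
          Finset.subset_inter_iff]
        tauto

lemma Bfun_pos (hq : ∀ S : Finset V, 0 ≤ qfun G p S) (hq0 : 0 < qfun G p ∅) (U : Finset V) :
    0 < Bfun G p U := by
  rw [Bfun_eq_sum_qfun]
  exact hq0.trans_le <|
    Finset.single_le_sum (fun S _ => hq S) (Finset.empty_mem_powerset Uᶜ)

end InclusionExclusion

section Lefthanded

variable {V : Type*} [PartialOrder V] {G : SimpleGraph V}

lemma Lefthanded.not_adj_of_le_of_incomparable (hG : Lefthanded G) {a b m : V} (ham : a ≤ m)
    (hbm : ¬ b ≤ m) (hmb : ¬ m < b) : ¬ G.Adj a b := by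
  intro hab
  rcases hG.2.1 a b hab with hle | hle
  · have hlt : a < b := lt_of_le_of_ne hle hab.ne
    rcases ham.lt_or_eq with ham | rfl
    · rcases hG.1 a b m hlt ham with h | h
      · exact hbm h
      · exact hmb (lt_of_le_of_ne h fun he => hbm he.ge)
    · exact hmb hlt
  · exact hbm (hle.trans ham)

variable [Fintype V]

@[simp] lemma mem_Dset {u v : V} : u ∈ Dset v ↔ u < v := by
  simp [Dset]

@[simp] lemma mem_Nset {u v : V} : u ∈ Nset G v ↔ u < v ∧ G.Adj u v := by
  simp [Nset]

lemma Nset_eq_filter (v : V) : Nset G v = Finset.univ.filter fun u => G.Adj u v ∧ u ≤ v := by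
  ext u
  simp only [mem_Nset, Finset.mem_filter, Finset.mem_univ, true_and, lt_iff_le_and_ne]
  exact ⟨fun ⟨⟨hle, _⟩, hadj⟩ => ⟨hadj, hle⟩, fun ⟨hadj, hle⟩ => ⟨⟨hle, hadj.ne⟩, hadj⟩⟩

lemma downClosed_Dset (v : V) : DownClosed (Dset v) :=
  fun _ hs _ hu => mem_Dset.mpr ((mem_Dset.mp hu).trans (mem_Dset.mp hs))

variable [DecidableEq V]

@[simp] lemma mem_Dbar {u v : V} : u ∈ Dbar v ↔ u ≤ v := by
  rw [Dbar, Finset.mem_insert, mem_Dset, le_iff_lt_or_eq, or_comm]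

lemma Fset_eq_filter (v : V) : Fset G v = (Dset v).filter fun u => ¬ G.Adj v u := by
  ext u
  simp only [Fset, Finset.mem_sdiff, Finset.mem_filter, mem_Dset, mem_Nset, G.adj_comm v u]
  tauto

lemma Lefthanded.downClosed_Fset (hG : Lefthanded G) (v : V) : DownClosed (Fset G v) := by
  intro s hs u hu
  rw [Fset_eq_filter, Finset.mem_filter, mem_Dset] at hs ⊢
  rw [mem_Dset] at hu
  exact ⟨hu.trans hs.1, fun hvu => hs.2 (hG.2.2 u s v hu hs.1 hvu)⟩

variable (p : V → ℝ)

lemma Bfun_Dbar (v : V) : Bfun G p (Dbar v) = Bfun G p (Dset v) - p v * Bfun G p (Fset G v) := by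
  rw [Dbar, Bfun_insert G p (by simp), Fset_eq_filter]

lemma Lefthanded.Bfun_mul_Bfun_Dset_of_maximal (hG : Lefthanded G) {U : Finset V}
    (hU : DownClosed U) {m : V} (hm : Maximal (· ∈ U) m) :
    Bfun G p U * Bfun G p (Dset m) = Bfun G p (Dbar m) * Bfun G p (U.erase m) := by
  set R := U \ Dbar m
  have hR : ∀ a ∈ Dbar m, ∀ b ∈ R, ¬ G.Adj a b := fun a ha b hb =>
    have hb' := Finset.mem_sdiff.mp hb
    hG.not_adj_of_le_of_incomparable (mem_Dbar.mp ha) (mt mem_Dbar.mpr hb'.2) (hm.not_gt hb'.1)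
  have hDset : Dset m ⊆ Dbar m := Finset.subset_insert m _
  have hDbar : Dbar m ⊆ U := Finset.insert_subset hm.prop (hU m hm.prop)
  have hU_eq : Bfun G p U = Bfun G p (Dbar m) * Bfun G p R := by
    rw [← Bfun_union G p Finset.disjoint_sdiff hR, Finset.union_sdiff_of_subset hDbar]
  have hErase_eq : Bfun G p (U.erase m) = Bfun G p (Dset m) * Bfun G p R := by
    have hErase : U.erase m = Dset m ∪ R := by
      ext u
      simp only [Finset.mem_erase, Finset.mem_union, Finset.mem_sdiff, mem_Dset, mem_Dbar, R]
      constructor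
      · rintro ⟨hne, hu⟩
        by_cases h : u ≤ m
        · exact Or.inl (lt_of_le_of_ne h hne)
        · exact Or.inr ⟨hu, h⟩
      · rintro (h | ⟨hu, h⟩)
        · exact ⟨h.ne, hDbar (mem_Dbar.mpr h.le)⟩
        · exact ⟨fun e => h e.le, hu⟩
    rw [hErase, Bfun_union G p (Finset.disjoint_sdiff.mono_left hDset)
      fun a ha => hR a (hDset ha)]
  rw [hU_eq, hErase_eq]
  ring

lemma Lefthanded.Bfun_mul_prod_Bfun_Dset (hG : Lefthanded G) {U : Finset V} (hU : DownClosed U) :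
    Bfun G p U * ∏ v ∈ U, Bfun G p (Dset v) = ∏ v ∈ U, Bfun G p (Dbar v) := by
  induction U using Finset.strongInduction with
  | H U ih =>
  rcases U.eq_empty_or_nonempty with rfl | hne
  · simp [Bfun_empty]
  obtain ⟨m, hm⟩ := U.exists_maximal hne
  have hErase : DownClosed (U.erase m) := by
    intro s hs u hu
    rw [Finset.mem_erase] at hs ⊢
    exact ⟨fun hum => hm.not_gt hs.2 (hum ▸ mem_Dset.mp hu), hU s hs.2 hu⟩
  rw [← Finset.mul_prod_erase U _ hm.prop, ← Finset.mul_prod_erase U _ hm.prop,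
    ← ih _ (Finset.erase_ssubset hm.prop) hErase]
  linear_combination (∏ v ∈ U.erase m, Bfun G p (Dset v)) *
    hG.Bfun_mul_Bfun_Dset_of_maximal p hU hm

lemma Lefthanded.Bfun_Dset_mul_prod_Nset (hG : Lefthanded G) (hne : ∀ u, Bfun G p (Dset u) ≠ 0)
    (v : V) :
    Bfun G p (Dset v) * ∏ u ∈ Nset G v, Bfun G p (Dset u)
      = Bfun G p (Fset G v) * ∏ u ∈ Nset G v, Bfun G p (Dbar u) := by
  have hsplit : Dset v = Fset G v ∪ Nset G v :=
    (Finset.sdiff_union_of_subset fun u hu => mem_Dset.mpr (mem_Nset.mp hu).1).symm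
  have hdisj : Disjoint (Fset G v) (Nset G v) := Finset.sdiff_disjoint
  have hD := hG.Bfun_mul_prod_Bfun_Dset p (downClosed_Dset v)
  have hF := hG.Bfun_mul_prod_Bfun_Dset p (hG.downClosed_Fset v)
  rw [hsplit, Finset.prod_union hdisj, Finset.prod_union hdisj, ← hsplit, ← hF] at hD
  refine mul_right_cancel₀ (b := ∏ u ∈ Fset G v, Bfun G p (Dset u))
    (Finset.prod_ne_zero_iff.mpr fun u _ => hne u) ?_
  linear_combination hD

end Lefthanded

theorem stmt10_general {V : Type*} [Fintype V] [PartialOrder V]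
    (G : SimpleGraph V) (p : V → ℝ) (hp : ∀ v, 0 ≤ p v ∧ p v ≤ 1)
    (hG : Lefthanded G)
    (hq : ∀ S : Finset V, 0 ≤ qfun G p S) (hq0 : 0 < qfun G p ∅) :
    ∃ x : V → ℝ, (∀ v, 0 ≤ x v ∧ x v ≤ 1) ∧
      (∀ v, p v = x v *
        ∏ u ∈ Finset.univ.filter (fun u => G.Adj u v ∧ u ≤ v), (1 - x u)) ∧
      ∏ v : V, (1 - x v) = qfun G p ∅ := by
  have hpos := Bfun_pos G p hq hq0
  have hne : ∀ u, Bfun G p (Dset u) ≠ 0 := fun u => (hpos _).ne'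
  set x : V → ℝ := fun v => p v * Bfun G p (Fset G v) / Bfun G p (Dset v)
  have hone (v : V) : 1 - x v = Bfun G p (Dbar v) / Bfun G p (Dset v) := by
    rw [Bfun_Dbar, sub_div, div_self (hne v)]
  have hprod (U : Finset V) :
      ∏ u ∈ U, (1 - x u) = (∏ u ∈ U, Bfun G p (Dbar u)) / ∏ u ∈ U, Bfun G p (Dset u) := by
    simp_rw [hone, Finset.prod_div_distrib]
  refine ⟨x, fun v => ⟨?_, ?_⟩, fun v => ?_, ?_⟩
  · exact div_nonneg (mul_nonneg (hp v).1 (hpos _).le) (hpos _).le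
  · have : 0 ≤ 1 - x v := hone v ▸ div_nonneg (hpos _).le (hpos _).le
    linarith
  · rw [← Nset_eq_filter, hprod, div_mul_div_comm, mul_assoc,
      ← hG.Bfun_Dset_mul_prod_Nset p hne v, mul_div_cancel_right₀ _ (mul_ne_zero (hne v) (Finset.prod_ne_zero_iff.mpr fun u _ => hne u))]
  · have hq_univ : qfun G p ∅ = Bfun G p Finset.univ := by
      rw [Bfun_eq_sum_qfun, Finset.compl_univ, Finset.powerset_empty, Finset.sum_singleton]
    rw [hprod, hq_univ, ← hG.Bfun_mul_prod_Bfun_Dset p fun _ _ _ _ => Finset.mem_univ _,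
      mul_div_cancel_right₀ _ (Finset.prod_ne_zero_iff.mpr fun u _ => hne u)]

theorem stmt10 {V : Type*} [Fintype V] [DecidableEq V] [PartialOrder V]
    (G : SimpleGraph V) (p : V → ℝ) (hp : ∀ v, 0 ≤ p v ∧ p v ≤ 1)
    (hG : Lefthanded G)
    (hq : ∀ S : Finset V, 0 ≤ qfun G p S) (hq0 : 0 < qfun G p ∅) :
    ∃ x : V → ℝ, (∀ v, 0 ≤ x v ∧ x v ≤ 1) ∧
      (∀ v, p v = x v *
        ∏ u ∈ Finset.univ.filter (fun u => G.Adj u v ∧ u ≤ v), (1 - x u)) ∧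
      ∏ v : V, (1 - x v) = qfun G p ∅ :=
  stmt10_general G p hp hG hq hq0
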